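/- arXiv:1603.05300 — 2 statements merged into one kernel-verified Lean document; each statement's English description precedes it below -/
import Mathlib

section
/- For $0 < \alpha < 2$, the symmetric neutral fractional density $N_{\alpha}^{0}(x) = \frac{1}{\pi} \cdot \frac{x^{\alpha-1} \sin(\pi\alpha/2)}{1 + 2 x^{\alpha} \cos(\pi\alpha/2) + x^{2\alpha}}$ satisfies $\int_0^{\infty} N_{\alpha}^{0}(x)\,dx = \frac{1}{2}$. -/
open Real MeasureTheory Set Filter

/-- The symmetric neutral fractional density has half-line mass 1/2. -/
theorem neutral_density_half_mass
    (α : ℝ) (hα : 0 < α) (hα2 : α < 2) :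
    ∫ x in Ioi (0:ℝ),
      (1 / π) * (x ^ (α - 1) * Real.sin (π * α / 2)) /
        (1 + 2 * x ^ α * Real.cos (π * α / 2) + x ^ (2 * α)) = 1 / 2 := by
  have hπ : (0:ℝ) < π := Real.pi_pos
  set θ := π * α / 2 with hθdef
  have hθ0 : 0 < θ := by positivity
  have hθπ : θ < π := by
    rw [hθdef]; nlinarith
  have hs : 0 < Real.sin θ := Real.sin_pos_of_pos_of_lt_pi hθ0 hθπ
  set k := Real.cos θ with hk
  set s := Real.sin θ with hsdef
  set c : ℝ := 1 / (π * α) with hc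
  set g : ℝ → ℝ := fun x => c * Real.arctan ((x ^ α + k) / s) with hg
  have hsk : s ^ 2 + k ^ 2 = 1 := Real.sin_sq_add_cos_sq θ
  -- denominator positivity
  have hden : ∀ x : ℝ, 0 < x →
      0 < 1 + 2 * x ^ α * k + x ^ (2 * α) := by
    intro x hx
    have h2 : x ^ (2 * α) = (x ^ α) ^ 2 := by
      rw [mul_comm 2 α, Real.rpow_mul hx.le, Real.rpow_two]
    rw [h2]
    nlinarith [sq_nonneg (x ^ α + k), hsk, hs]
  -- derivative
  have hderiv : ∀ x ∈ Ioi (0:ℝ), HasDerivAt g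
      ((1 / π) * (x ^ (α - 1) * Real.sin (π * α / 2)) /
        (1 + 2 * x ^ α * Real.cos (π * α / 2) + x ^ (2 * α))) x := by
    intro x hx
    have hx0 : 0 < x := hx
    have h1 : HasDerivAt (fun y : ℝ => y ^ α) (α * x ^ (α - 1)) x :=
      Real.hasDerivAt_rpow_const (Or.inl hx0.ne')
    have h2 : HasDerivAt (fun y : ℝ => (y ^ α + k) / s)
        ((α * x ^ (α - 1)) / s) x := (h1.add_const k).div_const s
    have h3 := (h2.arctan).const_mul c
    refine h3.congr_deriv (Eq.symm ?_)
    have h2a : x ^ (2 * α) = (x ^ α) ^ 2 := by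
      rw [mul_comm 2 α, Real.rpow_mul hx0.le, Real.rpow_two]
    have hd := hden x hx0
    rw [h2a] at hd ⊢
    rw [hc]
    have hs' : s ≠ 0 := hs.ne'
    have : 1 + ((x ^ α + k) / s) ^ 2 =
        (s ^ 2 + (x ^ α + k) ^ 2) / s ^ 2 := by
      field_simp
    rw [this]
    have hD : s ^ 2 + (x ^ α + k) ^ 2 = 1 + 2 * x ^ α * k + (x ^ α) ^ 2 := by
      nlinarith [hsk]
    rw [hD]
    show (1 / π) * (x ^ (α - 1) * s) / (1 + 2 * x ^ α * k + (x ^ α) ^ 2) = _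
    field_simp
  -- nonnegativity
  have hpos : ∀ x ∈ Ioi (0:ℝ), 0 ≤
      (1 / π) * (x ^ (α - 1) * Real.sin (π * α / 2)) /
        (1 + 2 * x ^ α * Real.cos (π * α / 2) + x ^ (2 * α)) := by
    intro x hx
    have hx0 : 0 < x := hx
    have := hden x hx0
    have hnum : 0 ≤ (1 / π) * (x ^ (α - 1) * Real.sin (π * α / 2)) := by
      have : 0 < x ^ (α - 1) := Real.rpow_pos_of_pos hx0 _
      have hsp : 0 < Real.sin (π * α / 2) := hs
      positivity
    exact div_nonneg hnum (by linarith [hden x hx0])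
  -- continuity at 0
  have hcont : ContinuousWithinAt g (Ici (0:ℝ)) 0 := by
    have h1 : ContinuousAt (fun y : ℝ => y ^ α) 0 :=
      Real.continuousAt_rpow_const 0 α (Or.inr hα.le)
    have h2 : ContinuousAt (fun y : ℝ => (y ^ α + k) / s) 0 :=
      (h1.add continuousAt_const).div continuousAt_const hs.ne'
    exact ((continuousAt_const.mul (Real.continuous_arctan.continuousAt.comp h2))).continuousWithinAt
  -- limit at infinity
  have htop : Tendsto g atTop (nhds (c * (π / 2))) := by
    have h1 : Tendsto (fun y : ℝ => y ^ α) atTop atTop :=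
      tendsto_rpow_atTop hα
    have h2 : Tendsto (fun y : ℝ => (y ^ α + k) / s) atTop atTop :=
      (tendsto_atTop_add_const_right _ k h1).atTop_div_const hs
    have h3 : Tendsto (fun y : ℝ => Real.arctan ((y ^ α + k) / s)) atTop (nhds (π / 2)) :=
      (Real.tendsto_arctan_atTop.mono_right nhdsWithin_le_nhds).comp h2
    exact h3.const_mul c
  have key := integral_Ioi_of_hasDerivAt_of_nonneg hcont hderiv hpos htop
  rw [key]
  -- evaluate g 0
  have h0 : (0:ℝ) ^ α = 0 := Real.zero_rpow hα.ne'
  have harct : Real.arctan (k / s) = π / 2 - θ := by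
    have ht : Real.tan (π / 2 - θ) = k / s := by
      rw [Real.tan_eq_sin_div_cos, Real.sin_pi_div_two_sub, Real.cos_pi_div_two_sub]
    rw [← ht, Real.arctan_tan (by linarith) (by linarith)]
  have hg0 : g 0 = c * (π / 2 - θ) := by
    rw [hg]; simp only [h0, zero_add]; rw [harct]
  rw [hg0, hc, hθdef]
  field_simp
  ring
end

section
/- Let $p_1$ be a probability density on $\mathbb{R}$, $p_2$ a probability density on $(0,\infty)$, and let $\gamma, \omega > 0$. Define $\psi(x;\tau) = \tau^{-\gamma} p_1(x \tau^{-\gamma})$, $\varphi(\tau;t) = t^{-\omega} p_2(\tau t^{-\omega})$, and $p(x;t) = t^{-\gamma\omega} q(x\, t^{-\gamma\omega})$ where $q(z) = \int_0^\infty p_1(z/\lambda^\gamma) p_2(\lambda) \lambda^{-\gamma} d\lambda$ is the density of the product $Z_1 Z_2^\gamma$. Then for every $t > 0$ and $x \in \mathbb{R}$, $p(x;t) = \int_0^{\infty} \psi(x;\tau)\, \varphi(\tau;t)\, d\tau$. -/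
open MeasureTheory Set

/-- For self-similar densities, the subordination representation coincides with
the product-of-independent-random-variables representation. -/
theorem subordination_eq_product
    (p₁ p₂ : ℝ → ℝ)
    (hp₁m : Measurable p₁) (hp₂m : Measurable p₂)
    (hp₁0 : ∀ x, 0 ≤ p₁ x) (hp₂0 : ∀ x, 0 ≤ p₂ x)
    (hp₁1 : ∫ x, p₁ x = 1) (hp₂1 : ∫ lam in Ioi (0:ℝ), p₂ lam = 1)
    (γ ω : ℝ) (hγ : 0 < γ) (hω : 0 < ω) :
    ∀ t : ℝ, 0 < t → ∀ x : ℝ,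
      t ^ (-(γ * ω)) *
        (∫ lam in Ioi (0:ℝ),
          p₁ ((x * t ^ (-(γ * ω))) / lam ^ γ) * p₂ lam * lam ^ (-γ)) =
      ∫ τ in Ioi (0:ℝ),
        (τ ^ (-γ) * p₁ (x * τ ^ (-γ))) * (t ^ (-ω) * p₂ (τ * t ^ (-ω))) := by
  intro t ht x
  have htω : (0:ℝ) < t ^ (-ω) := Real.rpow_pos_of_pos ht _
  set g : ℝ → ℝ := fun lam =>
    (lam ^ (-γ) * t ^ (-(γ * ω)) * p₁ (x * t ^ (-(γ * ω)) * lam ^ (-γ))) *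
      (t ^ (-ω) * p₂ lam) with hg
  have key : (∫ τ in Ioi (0:ℝ),
      (τ ^ (-γ) * p₁ (x * τ ^ (-γ))) * (t ^ (-ω) * p₂ (τ * t ^ (-ω)))) =
      ∫ τ in Ioi (0:ℝ), g (τ * t ^ (-ω)) := by
    apply setIntegral_congr_fun measurableSet_Ioi
    intro τ hτ
    have hτ0 : (0:ℝ) < τ := hτ
    have h1 : (τ * t ^ (-ω)) ^ (-γ) * t ^ (-(γ * ω)) = τ ^ (-γ) := by
      rw [Real.mul_rpow hτ0.le htω.le, ← Real.rpow_mul ht.le,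
        mul_assoc, ← Real.rpow_add ht,
        show -ω * -γ + -(γ * ω) = 0 by ring, Real.rpow_zero, mul_one]
    simp only [hg]
    rw [h1]
    congr 2
    rw [mul_assoc, ← h1]
    ring
  rw [key, MeasureTheory.integral_comp_mul_right_Ioi g 0 htω, zero_mul,
    ← Real.rpow_neg ht.le, neg_neg, smul_eq_mul]
  have : (∫ lam in Ioi (0:ℝ), g lam) =
      ∫ lam in Ioi (0:ℝ), (t ^ (-(γ * ω)) * t ^ (-ω)) *
        (p₁ ((x * t ^ (-(γ * ω))) / lam ^ γ) * p₂ lam * lam ^ (-γ)) := by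
    apply setIntegral_congr_fun measurableSet_Ioi
    intro lam hlam
    have hlam0 : (0:ℝ) < lam := hlam
    simp only [hg]
    rw [div_eq_mul_inv, ← Real.rpow_neg hlam0.le]
    ring
  rw [this, MeasureTheory.integral_const_mul, ← mul_assoc, ← mul_assoc,
    ← Real.rpow_add ht, ← Real.rpow_add ht,
    show ω + -(γ * ω) + -ω = -(γ * ω) by ring]
end
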